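/- Nonnegativity of the γ-vector of 2-truncated cubes (Gal's conjecture for this class): let n ≥ 1 and let K be a simplicial complex obtained from the boundary complex ∂♢ⁿ of the n-dimensional cross-polytope by a finite sequence of stellar subdivisions at edges (each with a fresh apex vertex). Then there exist nonnegative integers γ_0, γ_1, …, γ_{⌊n/2⌋} with γ_0 = 1 such that Σ_{i=0}^{n} f_{i-1}(K)·tⁱ·(1-t)^{n-i} = Σ_{i=0}^{⌊n/2⌋} γ_i·tⁱ·(1+t)^{n-2i} in ℤ[t]; in particular the h-polynomial of K of rank n is palindromic. -/

import Mathlib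

open Polynomial
open scoped Classical

/-- A (finite) simplicial complex: a family of finite faces closed under subsets. -/
def IsComplex {V : Type*} (K : Finset (Finset V)) : Prop :=
  ∀ F ∈ K, ∀ G ⊆ F, G ∈ K

/-- A flag simplicial complex: any set of vertices that is pairwise connected
by edges of `K` is a face of `K`. -/
def IsFlag {V : Type*} [DecidableEq V] (K : Finset (Finset V)) : Prop :=
  IsComplex K ∧ ∀ S : Finset V,
    (∀ v ∈ S, ({v} : Finset V) ∈ K) →
    (∀ u ∈ S, ∀ v ∈ S, u ≠ v → ({u, v} : Finset V) ∈ K) →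
    S ∈ K

/-- The link of a face `σ` in `K`. -/
noncomputable def link {V : Type*} [DecidableEq V] (K : Finset (Finset V)) (σ : Finset V) :
    Finset (Finset V) :=
  K.filter fun F => Disjoint F σ ∧ F ∪ σ ∈ K

/-- Stellar subdivision of `K` at the face `e` with (fresh) apex `w`:
`sd_e(K) = {F ∈ K : ¬(e ⊆ F)} ∪ {F ∪ S ∪ {w} : F ∈ link_K(e), S ⊊ e}`. -/
noncomputable def stellarSub {V : Type*} [DecidableEq V] (K : Finset (Finset V))
    (e : Finset V) (w : V) : Finset (Finset V) :=
  (K.filter fun F => ¬ e ⊆ F) ∪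
    (link K e).biUnion fun F => e.ssubsets.image fun S => F ∪ S ∪ {w}

/-- The f-polynomial `f(K)(t) = Σ_{F ∈ K} t^|F| = Σ_i f_{i-1}(K) tⁱ`. -/
noncomputable def fPoly {V : Type*} (K : Finset (Finset V)) : ℤ[X] :=
  ∑ F ∈ K, X ^ F.card

/-- The h-polynomial of rank `n`:
`h_n(K)(t) = Σ_{i=0}^{n} f_{i-1}(K) tⁱ (1-t)^{n-i} = Σ_{F ∈ K} t^|F| (1-t)^{n-|F|}`. -/
noncomputable def hPoly {V : Type*} (K : Finset (Finset V)) (n : ℕ) : ℤ[X] :=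
  ∑ F ∈ K, X ^ F.card * (1 - X) ^ (n - F.card)

/-- `faceCount K i = f_{i-1}(K)`, the number of faces of `K` of cardinality `i`. -/
noncomputable def faceCount {V : Type*} (K : Finset (Finset V)) (i : ℕ) : ℕ :=
  (K.filter fun F => F.card = i).card

/-- The boundary complex `∂♢ⁿ` of the `n`-dimensional cross-polytope, with
vertices `a_i = 2i`, `b_i = 2i+1` (`0 ≤ i < n`): all subsets containing at most
one of `a_i, b_i` for each `i`. -/
noncomputable def crossPolytopeBoundary (n : ℕ) : Finset (Finset ℕ) :=
  (Finset.range (2 * n)).powerset.filter fun F =>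
    ∀ i < n, ¬ (2 * i ∈ F ∧ 2 * i + 1 ∈ F)

/-- Complexes obtained from `∂♢ⁿ` by a finite sequence of stellar subdivisions
at edges, each with a fresh apex vertex: the boundary complexes of duals of
2-truncated `n`-cubes. -/
inductive TwoTruncated (n : ℕ) : Finset (Finset ℕ) → Prop
  | base : TwoTruncated n (crossPolytopeBoundary n)
  | step (K : Finset (Finset ℕ)) (a b w : ℕ) :
      TwoTruncated n K → a ≠ b → ({a, b} : Finset ℕ) ∈ K →
      (∀ F ∈ K, w ∉ F) →
      TwoTruncated n (stellarSub K {a, b} w)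

/-!
We prove more, by induction along the subdivisions: for every face `σ` of `K`, the link of `σ`
has a γ-nonnegative h-polynomial of rank `n - |σ|`. In `∂♢ⁿ` every link is again the boundary
of a cross-polytope, whose h-polynomial is `(1 + t)ᵐ`. Subdividing the edge `e = {a, b}` with
apex `w` changes the h-polynomial by `h(sd_e K) = h(K) + t · h(link_K e)` (the latter of rank
`n - 2`), and every link in `sd_e K` is of one of four kinds: the subdivision at `e` of a link
in `K`, a link in `K` with `b` renamed to `w`, a link in `K` of a face containing `e`, or the
join of such a link with the two points of `∂e`, which multiplies the h-polynomial by `1 + t`.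
So it suffices that γ-nonnegativity is preserved by `(p, q) ↦ p + t q` (ranks `m + 2` and `m`)
and by `p ↦ (1 + t) p`. Palindromicity holds because every `tⁱ (1 + t)ⁿ⁻²ⁱ` is palindromic.
-/

noncomputable def gammaPoly (γ : ℕ → ℕ) (m : ℕ) : ℤ[X] :=
  ∑ i ∈ Finset.range (m / 2 + 1), (γ i : ℤ[X]) * X ^ i * (1 + X) ^ (m - 2 * i)

def IsGammaNonneg (p : ℤ[X]) (m : ℕ) : Prop :=
  ∃ γ : ℕ → ℕ, γ 0 = 1 ∧ p = gammaPoly γ m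

lemma gammaPoly_add (γ δ : ℕ → ℕ) (m : ℕ) :
    gammaPoly (γ + δ) m = gammaPoly γ m + gammaPoly δ m := by
  simp only [gammaPoly, ← Finset.sum_add_distrib, Pi.add_apply, Nat.cast_add, add_mul]

lemma gammaPoly_shift (δ : ℕ → ℕ) (m : ℕ) :
    gammaPoly (fun | 0 => 0 | i + 1 => δ i) (m + 2) = X * gammaPoly δ m := by
  rw [gammaPoly, show (m + 2) / 2 + 1 = m / 2 + 1 + 1 by omega, Finset.sum_range_succ',
    gammaPoly, Finset.mul_sum]
  simp only [Nat.cast_zero, zero_mul, add_zero]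
  refine Finset.sum_congr rfl fun i _ => ?_
  rw [show m + 2 - 2 * (i + 1) = m - 2 * i by omega]
  ring

lemma gammaPoly_one_add_X_mul (γ : ℕ → ℕ) (m : ℕ) :
    (1 + X) * gammaPoly γ m = gammaPoly (fun i => if 2 * i ≤ m then γ i else 0) (m + 1) := by
  rw [gammaPoly, gammaPoly, Finset.mul_sum]
  refine Finset.sum_subset_zero_on_sdiff
    (Finset.range_subset_range.mpr (by omega)) (fun i hi => ?_) (fun i hi => ?_)
  · simp only [Finset.mem_sdiff, Finset.mem_range] at hi
    simp [show ¬ 2 * i ≤ m by omega]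
  · simp only [Finset.mem_range] at hi
    rw [if_pos (by omega), show m + 1 - 2 * i = m - 2 * i + 1 by omega, pow_succ]
    ring

lemma coeff_X_pow_mul_one_add_X_pow_symm {i k j : ℕ} (hj : j ≤ 2 * i + k) :
    (X ^ i * (1 + X) ^ k : ℤ[X]).coeff j = (X ^ i * (1 + X) ^ k : ℤ[X]).coeff (2 * i + k - j) := by
  simp only [coeff_X_pow_mul', coeff_one_add_X_pow]
  split_ifs
  · rw [← Nat.choose_symm (by omega : j - i ≤ k)]
    congr 2
    omega
  · rw [Nat.choose_eq_zero_of_lt (by omega), Nat.cast_zero]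
  · rw [Nat.choose_eq_zero_of_lt (by omega), Nat.cast_zero]
  · rfl

lemma gammaPoly_coeff_symm (γ : ℕ → ℕ) {m j : ℕ} (hj : j ≤ m) :
    (gammaPoly γ m).coeff j = (gammaPoly γ m).coeff (m - j) := by
  simp only [gammaPoly, finsetSum_coeff, mul_assoc, coeff_natCast_mul]
  refine Finset.sum_congr rfl fun i hi => ?_
  have hi : 2 * i ≤ m := by rw [Finset.mem_range] at hi; omega
  rw [coeff_X_pow_mul_one_add_X_pow_symm (by omega : j ≤ 2 * i + (m - 2 * i)),
    show 2 * i + (m - 2 * i) - j = m - j by omega]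

lemma isGammaNonneg_one_add_X_pow (m : ℕ) : IsGammaNonneg ((1 + X) ^ m) m := by
  refine ⟨fun i => if i = 0 then 1 else 0, rfl, ?_⟩
  rw [gammaPoly, Finset.sum_eq_single 0 (fun i _ hi => by simp [hi]) (by simp)]
  simp

namespace IsGammaNonneg

variable {p q : ℤ[X]} {m : ℕ}

lemma add_X_mul (hp : IsGammaNonneg p (m + 2)) (hq : IsGammaNonneg q m) :
    IsGammaNonneg (p + X * q) (m + 2) := by
  obtain ⟨γ, hγ, rfl⟩ := hp
  obtain ⟨δ, -, rfl⟩ := hq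
  exact ⟨γ + fun | 0 => 0 | i + 1 => δ i, by simp [hγ], by rw [gammaPoly_add, gammaPoly_shift]⟩

lemma one_add_X_mul (hp : IsGammaNonneg p m) : IsGammaNonneg ((1 + X) * p) (m + 1) := by
  obtain ⟨γ, hγ, rfl⟩ := hp
  exact ⟨_, by simp [hγ], gammaPoly_one_add_X_mul γ m⟩

end IsGammaNonneg

section Complex

variable {V : Type*} [DecidableEq V] {K : Finset (Finset V)} {σ τ F : Finset V} {n : ℕ}

lemma IsComplex.mem_link_iff (hK : IsComplex K) :
    F ∈ link K σ ↔ Disjoint F σ ∧ F ∪ σ ∈ K := by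
  simp only [link, Finset.mem_filter, and_iff_right_iff_imp]
  exact fun h => hK _ h.2 _ Finset.subset_union_left

lemma link_empty : link K ∅ = K := by
  ext F
  simp [link]

lemma isComplex_link (hK : IsComplex K) (σ : Finset V) : IsComplex (link K σ) := by
  intro F hF G hGF
  rw [hK.mem_link_iff] at hF ⊢
  exact ⟨hF.1.mono_left hGF, hK _ hF.2 _ (Finset.union_subset_union_left hGF)⟩

lemma IsComplex.link_link (hK : IsComplex K) (h : Disjoint σ τ) :
    link (link K σ) τ = link K (σ ∪ τ) := by
  ext F
  rw [(isComplex_link hK σ).mem_link_iff, hK.mem_link_iff, hK.mem_link_iff, Finset.union_assoc,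
    Finset.union_comm τ σ]
  grind [Finset.disjoint_left]

lemma IsComplex.link_eq_empty (hK : IsComplex K) (hσ : σ ∉ K) : link K σ = ∅ := by
  refine Finset.eq_empty_of_forall_notMem fun F hF => hσ ?_
  exact hK _ (hK.mem_link_iff.mp hF).2 _ Finset.subset_union_right

lemma IsComplex.filter_superset_eq_image_link (hK : IsComplex K) (σ : Finset V) :
    K.filter (σ ⊆ ·) = (link K σ).image (· ∪ σ) := by
  ext T
  simp only [Finset.mem_filter, Finset.mem_image, hK.mem_link_iff]
  refine ⟨fun ⟨hT, hσT⟩ => ⟨T \ σ, ⟨Finset.sdiff_disjoint, ?_⟩, ?_⟩, ?_⟩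
  · rwa [Finset.sdiff_union_of_subset hσT]
  · exact Finset.sdiff_union_of_subset hσT
  · rintro ⟨F, ⟨-, hFσ⟩, rfl⟩
    exact ⟨hFσ, Finset.subset_union_right⟩

lemma IsComplex.card_add_card_le_of_mem_link (hK : IsComplex K) (hn : ∀ F ∈ K, F.card ≤ n)
    (hF : F ∈ link K σ) : F.card + σ.card ≤ n := by
  rw [hK.mem_link_iff] at hF
  rw [← Finset.card_union_of_disjoint hF.1]
  exact hn _ hF.2

end Complex

lemma hPoly_image_map {V W : Type*} [DecidableEq W] {K : Finset (Finset V)} (f : V ↪ W)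
    (m : ℕ) : hPoly (K.image (·.map f)) m = hPoly K m := by
  rw [hPoly, Finset.sum_image fun F _ G _ h => Finset.map_injective f h]
  simp only [Finset.card_map, hPoly]

section Join

variable {V : Type*} [DecidableEq V] {K L : Finset (Finset V)} {e T : Finset V}

def join (K L : Finset (Finset V)) : Finset (Finset V) :=
  (K ×ˢ L).image fun p => p.1 ∪ p.2

lemma mem_join_ssubsets (hL : ∀ G ∈ L, Disjoint G e) :
    T ∈ join L e.ssubsets ↔ T \ e ∈ L ∧ ¬ e ⊆ T := by
  simp only [join, Finset.mem_image, Finset.mem_product, Finset.mem_ssubsets, Prod.exists]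
  constructor
  · rintro ⟨G, S, ⟨hG, hS⟩, rfl⟩
    have hSe := hS.subset
    have hGe := hL G hG
    refine ⟨?_, fun h => hS.not_subset ?_⟩
    · convert hG using 1
      grind [Finset.disjoint_left]
    · grind [Finset.disjoint_left]
  · rintro ⟨hT, heT⟩
    refine ⟨T \ e, T ∩ e, ⟨hT, ?_⟩, Finset.sdiff_union_inter T e⟩
    exact Finset.ssubset_iff_subset_ne.mpr
      ⟨Finset.inter_subset_right, fun h => heT (h ▸ Finset.inter_subset_left)⟩

lemma hPoly_union (h : Disjoint K L) (m : ℕ) : hPoly (K ∪ L) m = hPoly K m + hPoly L m :=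
  Finset.sum_union h

lemma hPoly_image_insert {w : V} (hw : ∀ F ∈ K, w ∉ F) (m : ℕ) :
    hPoly (K.image (insert w)) (m + 1) = X * hPoly K m := by
  have hinj : Set.InjOn (insert w) (K : Set (Finset V)) := fun F hF G hG h => by
    rw [← Finset.erase_insert (hw F hF), h, Finset.erase_insert (hw G hG)]
  rw [hPoly, Finset.sum_image hinj, hPoly, Finset.mul_sum]
  refine Finset.sum_congr rfl fun F hF => ?_
  rw [Finset.card_insert_of_notMem (hw F hF), Nat.add_sub_add_right, pow_succ]
  ring

lemma hPoly_image_union_right (he : ∀ F ∈ K, Disjoint F e) (m : ℕ) :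
    hPoly (K.image (· ∪ e)) (m + e.card) = X ^ e.card * hPoly K m := by
  have hinj : Set.InjOn (· ∪ e) (K : Set (Finset V)) := fun F hF G hG h => by
    rw [← Finset.union_sdiff_cancel_right (he F hF), ← Finset.union_sdiff_cancel_right (he G hG)]
    exact congrArg (· \ e) h
  rw [hPoly, Finset.sum_image hinj, hPoly, Finset.mul_sum]
  refine Finset.sum_congr rfl fun F hF => ?_
  rw [Finset.card_union_of_disjoint (he F hF), Nat.add_sub_add_right, pow_add]
  ring

lemma hPoly_join (hKL : ∀ F ∈ K, ∀ G ∈ L, Disjoint F G) {m k : ℕ}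
    (hm : ∀ F ∈ K, F.card ≤ m) (hk : ∀ G ∈ L, G.card ≤ k) :
    hPoly (join K L) (m + k) = hPoly K m * hPoly L k := by
  have hinj : Set.InjOn (fun p : Finset V × Finset V => p.1 ∪ p.2) (K ×ˢ L : Finset _) := by
    rintro ⟨F, G⟩ hFG ⟨F', G'⟩ hFG' h
    simp only [Finset.coe_product, Set.mem_prod, Finset.mem_coe] at hFG hFG' h
    have h₁ := hKL F hFG.1 G' hFG'.2
    have h₂ := hKL F' hFG'.1 G hFG.2
    have h₃ := hKL F hFG.1 G hFG.2
    have h₄ := hKL F' hFG'.1 G' hFG'.2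
    simp only [Finset.ext_iff, Finset.mem_union] at h
    simp only [Prod.mk.injEq, Finset.ext_iff]
    grind [Finset.disjoint_left]
  rw [hPoly, join, Finset.sum_image hinj, Finset.sum_product, hPoly, hPoly, Finset.sum_mul_sum]
  refine Finset.sum_congr rfl fun F hF => Finset.sum_congr rfl fun G hG => ?_
  have := hm F hF
  have := hk G hG
  rw [Finset.card_union_of_disjoint (hKL F hF G hG), show m + k - (F.card + G.card) =
    (m - F.card) + (k - G.card) by omega, pow_add, pow_add]
  ring

lemma hPoly_ssubsets_pair {a b : V} (hab : a ≠ b) :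
    hPoly ({a, b} : Finset V).ssubsets 1 = 1 + X := by
  have hb : a ∉ ({b} : Finset V) := by simpa using hab
  have hpow : ({b} : Finset V).powerset = {∅, {b}} := by
    ext s
    simp [Finset.subset_singleton_iff]
  simp only [hPoly, Finset.ssubsets, Finset.sum_erase_eq_sub, Finset.mem_powerset, Std.le_refl,
    Finset.sum_powerset_insert hb, hpow, Finset.mem_singleton, Finset.empty_ne_singleton,
    not_false_eq_true, Finset.sum_insert, Finset.sum_singleton, Finset.card_empty,
    Finset.card_singleton, Finset.card_pair hab, Finset.insert_nonempty, Finset.one_le_card,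
    Nat.sub_eq_zero_of_le, insert_empty_eq, Nat.one_le_ofNat, pow_zero, pow_one, tsub_zero,
    tsub_self, one_mul, mul_one]
  ring

lemma hPoly_join_ssubsets_pair {a b : V} (hab : a ≠ b) (hL : ∀ G ∈ L, Disjoint G {a, b})
    {m : ℕ} (hm : ∀ G ∈ L, G.card ≤ m) :
    hPoly (join L ({a, b} : Finset V).ssubsets) (m + 1) = (1 + X) * hPoly L m := by
  rw [hPoly_join (fun G hG S hS => (hL G hG).mono_right (Finset.mem_ssubsets.mp hS).subset) hm
    fun S hS => ?_, hPoly_ssubsets_pair hab, mul_comm]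
  have := Finset.card_lt_card (Finset.mem_ssubsets.mp hS)
  rw [Finset.card_pair hab] at this
  omega

end Join

section Stellar

variable {V : Type*} [DecidableEq V] {K : Finset (Finset V)} {e σ T : Finset V} {a b w : V}

lemma mem_stellarSub_iff (hK : IsComplex K) (hw : ∀ F ∈ K, w ∉ F) :
    T ∈ stellarSub K e w ↔
      (T ∈ K ∧ ¬ e ⊆ T) ∨ (w ∈ T ∧ T.erase w ∪ e ∈ K ∧ ¬ e ⊆ T.erase w) := by
  simp only [stellarSub, Finset.mem_union, Finset.mem_filter, Finset.mem_biUnion,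
    Finset.mem_image, Finset.mem_ssubsets, hK.mem_link_iff]
  refine or_congr Iff.rfl ⟨?_, ?_⟩
  · rintro ⟨F, ⟨hFe, hFeK⟩, S, hS, rfl⟩
    have hwFe := hw _ hFeK
    have hSe := hS.subset
    have hFS : (F ∪ S ∪ {w}).erase w = F ∪ S := by grind
    refine ⟨by simp, ?_, fun h => hS.not_subset ?_⟩
    · rwa [hFS, Finset.union_assoc, Finset.union_eq_right.mpr hSe]
    · grind [Finset.disjoint_left]
  · rintro ⟨hwT, hTe, heT⟩
    refine ⟨T.erase w \ e, ⟨Finset.sdiff_disjoint, by rwa [Finset.sdiff_union_self_eq_union]⟩,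
      T.erase w ∩ e, Finset.ssubset_iff_subset_ne.mpr
        ⟨Finset.inter_subset_right, fun h => heT (h ▸ Finset.inter_subset_left)⟩, ?_⟩
    rw [Finset.sdiff_union_inter, Finset.union_singleton, Finset.insert_erase hwT]

lemma isComplex_stellarSub (hK : IsComplex K) (hw : ∀ F ∈ K, w ∉ F) :
    IsComplex (stellarSub K e w) := by
  intro T hT G hGT
  rw [mem_stellarSub_iff hK hw] at hT ⊢
  rcases hT with ⟨hT, heT⟩ | ⟨hwT, hTe, heT⟩
  · exact Or.inl ⟨hK T hT G hGT, fun h => heT (h.trans hGT)⟩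
  have hG : G.erase w ⊆ T.erase w := Finset.erase_subset_erase w hGT
  by_cases hwG : w ∈ G
  · exact Or.inr ⟨hwG, hK _ hTe _ (Finset.union_subset_union_left hG), fun h => heT (h.trans hG)⟩
  · rw [Finset.erase_eq_of_notMem hwG] at hG
    exact Or.inl ⟨hK _ hTe _ (hG.trans Finset.subset_union_left), fun h => heT (h.trans hG)⟩

lemma card_le_of_mem_stellarSub (hK : IsComplex K) (hw : ∀ F ∈ K, w ∉ F) {n : ℕ}
    (hn : ∀ F ∈ K, F.card ≤ n) (hT : T ∈ stellarSub K e w) : T.card ≤ n := by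
  rcases (mem_stellarSub_iff hK hw).mp hT with ⟨hT, -⟩ | ⟨hwT, hTe, heT⟩
  · exact hn T hT
  have hlt : (T.erase w).card < (T.erase w ∪ e).card := Finset.card_lt_card <|
    Finset.ssubset_iff_subset_ne.mpr ⟨Finset.subset_union_left,
      fun h => heT (h ▸ Finset.subset_union_right)⟩
  have := Finset.card_erase_add_one hwT
  have := hn _ hTe
  omega

lemma stellarSub_eq_self (hK : IsComplex K) (he : e ∉ K) : stellarSub K e w = K := by
  rw [stellarSub, hK.link_eq_empty he, Finset.biUnion_empty, Finset.union_empty]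
  exact Finset.filter_true_of_mem fun F hF heF => he (hK F hF e heF)

lemma stellarSub_eq_union :
    stellarSub K e w = K.filter (¬ e ⊆ ·) ∪ (join (link K e) e.ssubsets).image (insert w) := by
  rw [stellarSub, join, Finset.image_image]
  congr 1
  ext T
  simp [Finset.union_singleton, and_assoc]

lemma hPoly_stellarSub (hK : IsComplex K) (hw : ∀ F ∈ K, w ∉ F) (hab : a ≠ b) {m : ℕ}
    (hm : ∀ F ∈ K, F.card ≤ m + 2) :
    hPoly (stellarSub K {a, b} w) (m + 2) = hPoly K (m + 2) + X * hPoly (link K {a, b}) m := by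
  set e : Finset V := {a, b}
  have he : e.card = 2 := Finset.card_pair hab
  have hLe : ∀ F ∈ link K e, Disjoint F e := fun F hF => (hK.mem_link_iff.mp hF).1
  have hLm : ∀ F ∈ link K e, F.card ≤ m := fun F hF => by
    have := hK.card_add_card_le_of_mem_link hm hF
    omega
  have hold : hPoly K (m + 2) =
      X ^ 2 * hPoly (link K e) m + hPoly (K.filter (¬ e ⊆ ·)) (m + 2) := by
    conv_lhs => rw [← Finset.filter_union_filter_not_eq (e ⊆ ·) K]
    rw [hPoly_union (Finset.disjoint_filter_filter_not _ _ _),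
      hK.filter_superset_eq_image_link, ← he, hPoly_image_union_right hLe]
  have hwJ : ∀ T ∈ join (link K e) e.ssubsets, w ∉ T := fun T hT hwT => by
    have hTe := (hK.mem_link_iff.mp ((mem_join_ssubsets hLe).mp hT).1).2
    exact hw _ hTe (by simp [hwT])
  have hnew : Disjoint (K.filter (¬ e ⊆ ·)) ((join (link K e) e.ssubsets).image (insert w)) := by
    refine Finset.disjoint_left.mpr fun T hT hT' => ?_
    obtain ⟨T, -, rfl⟩ := Finset.mem_image.mp hT'
    exact hw _ (Finset.mem_filter.mp hT).1 (Finset.mem_insert_self w T)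
  rw [stellarSub_eq_union, hPoly_union hnew, show m + 2 = m + 1 + 1 from rfl,
    hPoly_image_insert hwJ, hPoly_join_ssubsets_pair hab hLe hLm, hold]
  ring

lemma link_stellarSub_of_disjoint (hK : IsComplex K) (hw : ∀ F ∈ K, w ∉ F)
    (hσe : Disjoint σ e) (hwσ : w ∉ σ) :
    link (stellarSub K e w) σ = stellarSub (link K σ) e w := by
  have hwL : ∀ F ∈ link K σ, w ∉ F := fun F hF => hw F (Finset.mem_filter.mp hF).1
  ext T
  rw [(isComplex_stellarSub hK hw).mem_link_iff, mem_stellarSub_iff hK hw,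
    mem_stellarSub_iff (isComplex_link hK σ) hwL, hK.mem_link_iff, hK.mem_link_iff,
    show (T ∪ σ).erase w ∪ e = T.erase w ∪ e ∪ σ by grind]
  grind [Finset.disjoint_left]

lemma map_swap_eq_self {s : Finset V} (hb : b ∉ s) (hw : w ∉ s) :
    s.map (Equiv.swap b w).toEmbedding = s := by
  ext x
  rw [Finset.mem_map_equiv, Equiv.symm_swap, Equiv.swap_apply_def]
  grind

lemma mem_stellarSub_iff_map_swap_mem (hK : IsComplex K) (hw : ∀ F ∈ K, w ∉ F)
    (he : {a, b} ∈ K) {U : Finset V} (haU : a ∈ U) :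
    U ∈ stellarSub K {a, b} w ↔ U.map (Equiv.swap b w).toEmbedding ∈ K := by
  have hwa : w ≠ a := fun h => hw _ he (by simp [h])
  have hwb : w ≠ b := fun h => hw _ he (by simp [h])
  rw [mem_stellarSub_iff hK hw]
  by_cases hbU : b ∈ U
  · refine iff_of_false (by grind) fun h => hw _ h ?_
    simpa [Finset.mem_map_equiv] using hbU
  by_cases hwU : w ∈ U
  · have hUK : U ∉ K := fun h => hw _ h hwU
    rw [show U.map (Equiv.swap b w).toEmbedding = U.erase w ∪ {a, b} by
      ext x; rw [Finset.mem_map_equiv, Equiv.symm_swap, Equiv.swap_apply_def]; grind]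
    grind
  · rw [map_swap_eq_self hbU hwU]
    grind

lemma link_stellarSub_of_mem_of_notMem (hK : IsComplex K) (hw : ∀ F ∈ K, w ∉ F)
    (he : {a, b} ∈ K) (haσ : a ∈ σ) (hbσ : b ∉ σ) (hwσ : w ∉ σ) :
    link (stellarSub K {a, b} w) σ = (link K σ).image (·.map (Equiv.swap b w).toEmbedding) := by
  set s := (Equiv.swap b w).toEmbedding
  have hs : ∀ G : Finset V, (G.map s).map s = G := fun G => by
    rw [Finset.map_map]
    convert Finset.map_refl
    ext x
    simp [s]
  have hdisj : ∀ G : Finset V, Disjoint (G.map s) σ ↔ Disjoint G σ := fun G => by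
    conv_lhs => rw [← map_swap_eq_self hbσ hwσ]
    exact Finset.disjoint_map s
  ext T
  rw [(isComplex_stellarSub hK hw).mem_link_iff,
    mem_stellarSub_iff_map_swap_mem hK hw he (Finset.mem_union_right _ haσ), Finset.map_union,
    map_swap_eq_self hbσ hwσ, Finset.mem_image]
  refine ⟨fun ⟨hTσ, hTσK⟩ => ⟨T.map s, hK.mem_link_iff.mpr ⟨(hdisj T).mpr hTσ, hTσK⟩, hs T⟩, ?_⟩
  rintro ⟨G, hG, rfl⟩
  rw [hK.mem_link_iff] at hG
  rw [hs]
  exact ⟨(hdisj G).mpr hG.1, hG.2⟩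

lemma link_stellarSub_of_disjoint_erase (hK : IsComplex K) (hw : ∀ F ∈ K, w ∉ F)
    (hwσ : w ∈ σ) (hσe : Disjoint (σ.erase w) e) (hσK : σ.erase w ∪ e ∈ K) :
    link (stellarSub K e w) σ = join (link K (σ.erase w ∪ e)) e.ssubsets := by
  have hLe : ∀ G ∈ link K (σ.erase w ∪ e), Disjoint G e :=
    fun G hG => (hK.mem_link_iff.mp hG).1.mono_right Finset.subset_union_right
  have hwe : w ∉ e := fun h => hw _ hσK (Finset.mem_union_right _ h)
  ext T
  rw [(isComplex_stellarSub hK hw).mem_link_iff, mem_stellarSub_iff hK hw,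
    mem_join_ssubsets hLe, hK.mem_link_iff]
  have hTσ : T ∪ σ ∉ K := fun h => hw _ h (Finset.mem_union_right _ hwσ)
  simp only [hTσ, false_and, false_or, Finset.mem_union_right _ hwσ, true_and]
  by_cases hwT : w ∈ T
  · have hTe : w ∈ T \ e ∪ (σ.erase w ∪ e) := by simp [hwT, hwe]
    exact iff_of_false (fun h => Finset.disjoint_left.mp h.1 hwT hwσ)
      fun h => hw _ h.1.2 hTe
  rw [Finset.disjoint_left] at hσe
  have hd : Disjoint T σ ↔ Disjoint (T \ e) (σ.erase w ∪ e) := by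
    simp only [Finset.disjoint_left, Finset.mem_sdiff, Finset.mem_union, Finset.mem_erase]
    grind
  have hs : e ⊆ (T ∪ σ).erase w ↔ e ⊆ T := by grind
  rw [show (T ∪ σ).erase w ∪ e = T \ e ∪ (σ.erase w ∪ e) by grind, hd, hs, and_assoc]

lemma link_stellarSub_of_mem_erase (hK : IsComplex K) (hw : ∀ F ∈ K, w ∉ F)
    (hwσ : w ∈ σ) (haσ : a ∈ σ.erase w) (hbσ : b ∉ σ.erase w) :
    link (stellarSub K {a, b} w) σ = link K (σ.erase w ∪ {a, b}) := by
  ext T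
  rw [(isComplex_stellarSub hK hw).mem_link_iff, mem_stellarSub_iff hK hw, hK.mem_link_iff]
  have hTσ : T ∪ σ ∉ K := fun h => hw _ h (Finset.mem_union_right _ hwσ)
  simp only [hTσ, false_and, false_or, Finset.mem_union_right _ hwσ, true_and]
  by_cases hwT : w ∈ T
  · exact iff_of_false (fun h => Finset.disjoint_left.mp h.1 hwT hwσ)
      fun h => hw _ h.2 (Finset.mem_union_left _ hwT)
  rw [show (T ∪ σ).erase w ∪ {a, b} = T ∪ (σ.erase w ∪ {a, b}) by grind]
  simp only [Finset.disjoint_left, Finset.subset_iff, Finset.mem_union, Finset.mem_erase,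
    Finset.mem_insert, Finset.mem_singleton] at haσ hbσ ⊢
  grind

end Stellar

section CrossPolytope

/-- The boundary of the cross-polytope on the antipodal pairs `{2i, 2i + 1}`, `i ∈ s`;
the links of its faces are again of this form. -/
def crossComplex (s : Finset ℕ) : Finset (Finset ℕ) :=
  (s.biUnion fun i => {2 * i, 2 * i + 1}).powerset.filter fun F => Set.InjOn (· / 2) F

variable {s σ F : Finset ℕ}

lemma mem_crossComplex : F ∈ crossComplex s ↔ (∀ x ∈ F, x / 2 ∈ s) ∧ Set.InjOn (· / 2) F := by
  simp only [crossComplex, Finset.mem_filter, Finset.mem_powerset, Finset.subset_iff,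
    Finset.mem_biUnion, Finset.mem_insert, Finset.mem_singleton]
  refine and_congr_left' (forall₂_congr fun x _ => ⟨?_, fun h => ⟨x / 2, h, by omega⟩⟩)
  rintro ⟨i, hi, rfl | rfl⟩ <;> simpa [Nat.add_div_of_dvd_right] using hi

lemma isComplex_crossComplex (s : Finset ℕ) : IsComplex (crossComplex s) := fun F hF G hGF => by
  rw [mem_crossComplex] at hF ⊢
  exact ⟨fun x hx => hF.1 x (hGF hx), hF.2.mono (Finset.coe_subset.mpr hGF)⟩

lemma card_le_of_mem_crossComplex (hF : F ∈ crossComplex s) : F.card ≤ s.card :=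
  Finset.card_le_card_of_injOn _ (mem_crossComplex.mp hF).1 (mem_crossComplex.mp hF).2

lemma link_crossComplex (hσ : σ ∈ crossComplex s) :
    link (crossComplex s) σ = crossComplex (s \ σ.image (· / 2)) := by
  rw [mem_crossComplex] at hσ
  ext F
  rw [(isComplex_crossComplex s).mem_link_iff, mem_crossComplex, mem_crossComplex,
    Finset.coe_union]
  simp only [Set.InjOn, Set.mem_union, Finset.mem_coe, Finset.mem_union, Finset.mem_sdiff,
    Finset.mem_image, Finset.disjoint_left] at hσ ⊢
  grind

lemma card_sdiff_image_div_two (hσ : σ ∈ crossComplex s) :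
    (s \ σ.image (· / 2)).card = s.card - σ.card := by
  rw [mem_crossComplex] at hσ
  rw [Finset.card_sdiff_of_subset (Finset.image_subset_iff.mpr hσ.1),
    Finset.card_image_of_injOn hσ.2]

lemma disjoint_pair_of_mem_crossComplex {i : ℕ} (hi : i ∉ s) (hF : F ∈ crossComplex s) :
    Disjoint F {2 * i, 2 * i + 1} := by
  rw [Finset.disjoint_left]
  intro x hx hx'
  have := (mem_crossComplex.mp hF).1 x hx
  simp only [Finset.mem_insert, Finset.mem_singleton] at hx'
  rcases hx' with rfl | rfl <;> simp_all [Nat.add_div_of_dvd_right]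

lemma crossComplex_insert {i : ℕ} (hi : i ∉ s) :
    crossComplex (insert i s) = join (crossComplex s) ({2 * i, 2 * i + 1} : Finset ℕ).ssubsets := by
  ext T
  rw [mem_join_ssubsets fun G => disjoint_pair_of_mem_crossComplex hi, mem_crossComplex,
    mem_crossComplex]
  have hpair : ∀ x, x / 2 = i ↔ x = 2 * i ∨ x = 2 * i + 1 := by omega
  simp only [Set.InjOn, Finset.mem_coe, Finset.mem_insert, Finset.mem_sdiff,
    Finset.mem_singleton, Finset.insert_subset_iff, Finset.singleton_subset_iff]
  grind

lemma hPoly_crossComplex (s : Finset ℕ) : hPoly (crossComplex s) s.card = (1 + X) ^ s.card := by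
  induction s using Finset.induction_on with
  | empty => simp [hPoly, crossComplex, Finset.filter_singleton]
  | insert i s hi ih =>
    rw [crossComplex_insert hi, Finset.card_insert_of_notMem hi,
      hPoly_join_ssubsets_pair (by omega) (fun G => disjoint_pair_of_mem_crossComplex hi)
        fun G => card_le_of_mem_crossComplex, ih, pow_succ, mul_comm]

lemma crossPolytopeBoundary_eq (n : ℕ) :
    crossPolytopeBoundary n = crossComplex (Finset.range n) := by
  ext F
  simp only [crossPolytopeBoundary, Finset.mem_filter, Finset.mem_powerset, Finset.subset_iff,
    mem_crossComplex, Finset.mem_range, Set.InjOn, Finset.mem_coe]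
  constructor
  · rintro ⟨hlt, hpair⟩
    refine ⟨fun x hx => by have := hlt hx; omega, fun x hx y hy hxy => ?_⟩
    obtain ⟨k, hk⟩ : ∃ k, k = x / 2 := ⟨_, rfl⟩
    have hkn : k < n := by have := hlt hx; omega
    by_contra hne
    rcases Nat.lt_or_gt_of_ne hne with h | h
    · obtain ⟨rfl, rfl⟩ : x = 2 * k ∧ y = 2 * k + 1 := by omega
      exact hpair k hkn ⟨hx, hy⟩
    · obtain ⟨rfl, rfl⟩ : y = 2 * k ∧ x = 2 * k + 1 := by omega
      exact hpair k hkn ⟨hy, hx⟩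
  · rintro ⟨hlt, hinj⟩
    refine ⟨fun x hx => by have := hlt x hx; omega, fun i _ h => ?_⟩
    have := hinj h.1 h.2 (by omega)
    omega

end CrossPolytope

section GammaLinks

variable {V : Type*} [DecidableEq V] {K : Finset (Finset V)} {σ : Finset V} {a b w : V} {n : ℕ}

def HasGammaNonnegLinks (n : ℕ) (K : Finset (Finset V)) : Prop :=
  ∀ σ ∈ K, IsGammaNonneg (hPoly (link K σ) (n - σ.card)) (n - σ.card)

lemma hasGammaNonnegLinks_crossComplex (s : Finset ℕ) :
    HasGammaNonnegLinks s.card (crossComplex s) := fun σ hσ => by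
  rw [link_crossComplex hσ, ← card_sdiff_image_div_two hσ, hPoly_crossComplex]
  exact isGammaNonneg_one_add_X_pow _

namespace HasGammaNonnegLinks

variable (hg : HasGammaNonnegLinks n K) (hK : IsComplex K) (hw : ∀ F ∈ K, w ∉ F)
include hg hK hw

lemma isGammaNonneg_link_stellarSub_of_disjoint (hn : ∀ F ∈ K, F.card ≤ n) (hab : a ≠ b)
    (hσ : σ ∈ K) (hσe : Disjoint σ {a, b}) :
    IsGammaNonneg (hPoly (link (stellarSub K {a, b} w) σ) (n - σ.card)) (n - σ.card) := by
  rw [link_stellarSub_of_disjoint hK hw hσe (hw σ hσ)]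
  by_cases heL : {a, b} ∈ link K σ
  swap
  · rw [stellarSub_eq_self (isComplex_link hK σ) heL]
    exact hg σ hσ
  have hσeK : σ ∪ {a, b} ∈ K := Finset.union_comm σ _ ▸ (hK.mem_link_iff.mp heL).2
  have hcard : (σ ∪ {a, b}).card = σ.card + 2 := by
    rw [Finset.card_union_of_disjoint hσe, Finset.card_pair hab]
  obtain ⟨m, hm⟩ : ∃ m, n - σ.card = m + 2 := ⟨n - (σ.card + 2), by have := hn _ hσeK; omega⟩
  have hLm : ∀ F ∈ link K σ, F.card ≤ m + 2 := fun F hF => by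
    have := hK.card_add_card_le_of_mem_link hn hF
    omega
  have hlink := hg _ hσeK
  rw [hcard, show n - (σ.card + 2) = m by omega] at hlink
  rw [hm, hPoly_stellarSub (isComplex_link hK σ) (fun F hF => hw F (Finset.mem_filter.mp hF).1)
    hab hLm, hK.link_link hσe]
  exact (hm ▸ hg σ hσ).add_X_mul hlink

lemma isGammaNonneg_link_stellarSub_of_mem (he : {a, b} ∈ K) (hσ : σ ∈ K) (ha : a ∈ σ)
    (hb : b ∉ σ) :
    IsGammaNonneg (hPoly (link (stellarSub K {a, b} w) σ) (n - σ.card)) (n - σ.card) := by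
  rw [link_stellarSub_of_mem_of_notMem hK hw he ha hb (hw σ hσ), hPoly_image_map]
  exact hg σ hσ

lemma isGammaNonneg_link_stellarSub_of_apex_mem_of_disjoint (hn : ∀ F ∈ K, F.card ≤ n)
    (hab : a ≠ b) (hwσ : w ∈ σ) (hσK : σ.erase w ∪ {a, b} ∈ K)
    (hσe : Disjoint (σ.erase w) {a, b}) :
    IsGammaNonneg (hPoly (link (stellarSub K {a, b} w) σ) (n - σ.card)) (n - σ.card) := by
  have hcard : (σ.erase w ∪ {a, b}).card = σ.card + 1 := by
    rw [Finset.card_union_of_disjoint hσe, Finset.card_pair hab, ← Finset.card_erase_add_one hwσ]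
  obtain ⟨m, hm⟩ : ∃ m, n - σ.card = m + 1 := ⟨n - (σ.card + 1), by have := hn _ hσK; omega⟩
  have hLe : ∀ G ∈ link K (σ.erase w ∪ {a, b}), Disjoint G {a, b} :=
    fun G hG => (hK.mem_link_iff.mp hG).1.mono_right Finset.subset_union_right
  have hLm : ∀ G ∈ link K (σ.erase w ∪ {a, b}), G.card ≤ m := fun G hG => by
    have := hK.card_add_card_le_of_mem_link hn hG
    omega
  have hlink := hg _ hσK
  rw [hcard, show n - (σ.card + 1) = m by omega] at hlink
  rw [link_stellarSub_of_disjoint_erase hK hw hwσ hσe hσK, hm,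
    hPoly_join_ssubsets_pair hab hLe hLm]
  exact hlink.one_add_X_mul

lemma isGammaNonneg_link_stellarSub_of_apex_mem_of_mem (hwσ : w ∈ σ)
    (hσK : σ.erase w ∪ {a, b} ∈ K) (ha : a ∈ σ.erase w) (hb : b ∉ σ.erase w) :
    IsGammaNonneg (hPoly (link (stellarSub K {a, b} w) σ) (n - σ.card)) (n - σ.card) := by
  have hcard : (σ.erase w ∪ {a, b}).card = σ.card := by
    rw [show σ.erase w ∪ {a, b} = insert b (σ.erase w) by grind,
      Finset.card_insert_of_notMem hb, Finset.card_erase_add_one hwσ]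
  rw [link_stellarSub_of_mem_erase hK hw hwσ ha hb]
  simpa only [hcard] using hg _ hσK

lemma stellarSub (hn : ∀ F ∈ K, F.card ≤ n) (hab : a ≠ b) (he : {a, b} ∈ K) :
    HasGammaNonnegLinks n (stellarSub K {a, b} w) := by
  have hba : {b, a} ∈ K := Finset.pair_comm a b ▸ he
  intro σ hσ
  rcases (mem_stellarSub_iff hK hw).mp hσ with ⟨hσK, hσe⟩ | ⟨hwσ, hσK, hσe⟩
  · by_cases ha : a ∈ σ
    · have hb : b ∉ σ :=
        fun hb => hσe (Finset.insert_subset ha (Finset.singleton_subset_iff.mpr hb))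
      exact hg.isGammaNonneg_link_stellarSub_of_mem hK hw he hσK ha hb
    by_cases hb : b ∈ σ
    · rw [Finset.pair_comm]
      exact hg.isGammaNonneg_link_stellarSub_of_mem hK hw hba hσK hb ha
    exact hg.isGammaNonneg_link_stellarSub_of_disjoint hK hw hn hab hσK (by simp [ha, hb])
  · by_cases ha : a ∈ σ.erase w
    · have hb : b ∉ σ.erase w :=
        fun hb => hσe (Finset.insert_subset ha (Finset.singleton_subset_iff.mpr hb))
      exact hg.isGammaNonneg_link_stellarSub_of_apex_mem_of_mem hK hw hwσ hσK ha hb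
    by_cases hb : b ∈ σ.erase w
    · rw [Finset.pair_comm] at hσK ⊢
      exact hg.isGammaNonneg_link_stellarSub_of_apex_mem_of_mem hK hw hwσ hσK hb ha
    exact hg.isGammaNonneg_link_stellarSub_of_apex_mem_of_disjoint hK hw hn hab hwσ hσK
      (by simp [ha, hb])

end HasGammaNonnegLinks

end GammaLinks

namespace TwoTruncated

variable {n : ℕ} {K : Finset (Finset ℕ)}

lemma isComplex (h : TwoTruncated n K) : IsComplex K := by
  induction h with
  | base => exact crossPolytopeBoundary_eq n ▸ isComplex_crossComplex _
  | step K a b w _ _ _ hw ih => exact isComplex_stellarSub ih hw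

lemma card_le (h : TwoTruncated n K) : ∀ F ∈ K, F.card ≤ n := by
  induction h with
  | base =>
    intro F hF
    rw [crossPolytopeBoundary_eq] at hF
    simpa using card_le_of_mem_crossComplex hF
  | step K a b w hK _ _ hw ih => exact fun T hT => card_le_of_mem_stellarSub hK.isComplex hw ih hT

lemma empty_mem (h : TwoTruncated n K) : ∅ ∈ K := by
  induction h with
  | base => simp [crossPolytopeBoundary]
  | step K a b w _ _ _ _ ih => simp [stellarSub, ih]

lemma hasGammaNonnegLinks (h : TwoTruncated n K) : HasGammaNonnegLinks n K := by
  induction h with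
  | base => simpa [crossPolytopeBoundary_eq] using hasGammaNonnegLinks_crossComplex (Finset.range n)
  | step K a b w hK hab he hw ih => exact ih.stellarSub hK.isComplex hw hK.card_le hab he

end TwoTruncated

theorem gamma_nonneg_twoTruncated_general (n : ℕ) (K : Finset (Finset ℕ))
    (hK : TwoTruncated n K) :
    ∃ γ : ℕ → ℕ, γ 0 = 1 ∧
      hPoly K n = ∑ i ∈ Finset.range (n / 2 + 1),
        (γ i : ℤ[X]) * X ^ i * (1 + X) ^ (n - 2 * i) ∧
      ∀ i ≤ n, (hPoly K n).coeff i = (hPoly K n).coeff (n - i) := by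
  obtain ⟨γ, hγ0, hγ⟩ := hK.hasGammaNonnegLinks ∅ hK.empty_mem
  rw [link_empty, Finset.card_empty, Nat.sub_zero] at hγ
  exact ⟨γ, hγ0, hγ, fun i hi => hγ ▸ gammaPoly_coeff_symm γ hi⟩

/-- Gal's conjecture for 2-truncated cubes: for every
complex `K` obtained from `∂♢ⁿ` (`n ≥ 1`) by edge stellar subdivisions with
fresh apexes, there are nonnegative integers `γ_0 = 1, γ_1, …, γ_{⌊n/2⌋}` with
`Σ_i f_{i-1}(K) tⁱ(1-t)^{n-i} = Σ_i γ_i tⁱ(1+t)^{n-2i}`; in particular the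
h-polynomial of `K` of rank `n` is palindromic. -/
theorem gamma_nonneg_twoTruncated (n : ℕ) (hn : 1 ≤ n) (K : Finset (Finset ℕ))
    (hK : TwoTruncated n K) :
    ∃ γ : ℕ → ℕ, γ 0 = 1 ∧
      hPoly K n = ∑ i ∈ Finset.range (n / 2 + 1),
        (γ i : ℤ[X]) * X ^ i * (1 + X) ^ (n - 2 * i) ∧
      ∀ i ≤ n, (hPoly K n).coeff i = (hPoly K n).coeff (n - i) :=
  gamma_nonneg_twoTruncated_general n K hK
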